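/- arXiv:1807.00278 — 9 statements merged into one kernel-verified Lean document; each statement's English description precedes it below -/
import Mathlib

section
/- The map g₃ defined by v_{j,i}^3 ↦ v_{i,j}^2, v_{j,i}^2 ↦ v_{i,j}^3, v_{j,i}^1 ↦ v_{i,j}^0, v_{j,i}^0 ↦ v_{i,j}^1 is an automorphism of the graph TRC4C8(R)[n,n]. -/
abbrev TV (n : ℕ) := ZMod n × ZMod n × Fin 4

def baseRel (n : ℕ) (a b : TV n) : Prop :=
  ∃ j i : ZMod n,
    (a = (j, i, 0) ∧ b = (j, i, 1)) ∨
    (a = (j, i, 0) ∧ b = (j, i, 2)) ∨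
    (a = (j, i, 0) ∧ b = (j + 1, i, 3)) ∨
    (a = (j, i, 1) ∧ b = (j, i, 3)) ∨
    (a = (j, i, 1) ∧ b = (j, i + 1, 2)) ∨
    (a = (j, i, 2) ∧ b = (j, i, 3))

def TRC (n : ℕ) : SimpleGraph (TV n) := SimpleGraph.fromRel (baseRel n)

def g1 (n : ℕ) : Equiv.Perm (TV n) :=
  ⟨fun p => (p.1, p.2.1 - 1, p.2.2), fun p => (p.1, p.2.1 + 1, p.2.2),
   fun p => by simp, fun p => by simp⟩

def g2 (n : ℕ) : Equiv.Perm (TV n) :=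
  ⟨fun p => (p.1 + 1, p.2.1, p.2.2), fun p => (p.1 - 1, p.2.1, p.2.2),
   fun p => by simp, fun p => by simp⟩

def sig : Fin 4 → Fin 4 := ![1, 0, 3, 2]

def g3 (n : ℕ) : Equiv.Perm (TV n) :=
  Function.Involutive.toPerm (fun p => (p.2.1, p.1, sig p.2.2))
    (by rintro ⟨a, b, c⟩; simp only [Prod.mk.injEq]; refine ⟨trivial, trivial, ?_⟩; fin_cases c <;> rfl)

def tau : Fin 4 → Fin 4 := ![3, 2, 1, 0]

def g4 (n : ℕ) : Equiv.Perm (TV n) :=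
  Function.Involutive.toPerm (fun p => (1 - p.1, 1 - p.2.1, tau p.2.2))
    (by rintro ⟨a, b, c⟩; simp only [Prod.mk.injEq, sub_sub_cancel]
        refine ⟨trivial, trivial, ?_⟩; fin_cases c <;> rfl)


lemma g3_apply (n : ℕ) (j i : ZMod n) (t : Fin 4) :
    g3 n (j, i, t) = (i, j, sig t) := rfl

lemma g3_key (n : ℕ) (a b : TV n) (h : baseRel n a b) :
    baseRel n (g3 n a) (g3 n b) ∨ baseRel n (g3 n b) (g3 n a) := by
  obtain ⟨j, i, h⟩ := h
  rcases h with ⟨ha, hb⟩ | ⟨ha, hb⟩ | ⟨ha, hb⟩ | ⟨ha, hb⟩ | ⟨ha, hb⟩ | ⟨ha, hb⟩ <;>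
    subst ha <;> subst hb <;> simp only [g3_apply]
  · right; exact ⟨i, j, Or.inl ⟨rfl, rfl⟩⟩
  · left; exact ⟨i, j, Or.inr (Or.inr (Or.inr (Or.inl ⟨rfl, rfl⟩)))⟩
  · left; exact ⟨i, j, Or.inr (Or.inr (Or.inr (Or.inr (Or.inl ⟨rfl, rfl⟩))))⟩
  · left; exact ⟨i, j, Or.inr (Or.inl ⟨rfl, rfl⟩)⟩
  · left; exact ⟨i, j, Or.inr (Or.inr (Or.inl ⟨rfl, rfl⟩))⟩
  · right; exact ⟨i, j, Or.inr (Or.inr (Or.inr (Or.inr (Or.inr ⟨rfl, rfl⟩))))⟩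

lemma g3_invol (n : ℕ) (a : TV n) : g3 n (g3 n a) = a :=
  (g3 n).left_inv a

lemma g3_rel_iff (n : ℕ) (a b : TV n) :
    (baseRel n (g3 n a) (g3 n b) ∨ baseRel n (g3 n b) (g3 n a)) ↔
    (baseRel n a b ∨ baseRel n b a) := by
  constructor
  · rintro (h | h)
    · have := g3_key n _ _ h
      rwa [g3_invol, g3_invol, or_comm, Or.comm] at this
    · have := g3_key n _ _ h
      rw [g3_invol, g3_invol] at this
      exact this.symm
  · rintro (h | h)
    · exact g3_key n _ _ h
    · exact (g3_key n _ _ h).symm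

/-- g₃ : v_{j,i}^3 ↦ v_{i,j}^2, v_{j,i}^2 ↦ v_{i,j}^3, v_{j,i}^1 ↦ v_{i,j}^0,
v_{j,i}^0 ↦ v_{i,j}^1 is an automorphism of TRC4C8(R)[n,n]. -/
theorem g3_is_automorphism (n : ℕ) :
    ∃ φ : TRC n ≃g TRC n, ∀ (j i : ZMod n),
      φ (j, i, 3) = (i, j, 2) ∧ φ (j, i, 2) = (i, j, 3) ∧
      φ (j, i, 1) = (i, j, 0) ∧ φ (j, i, 0) = (i, j, 1) := by
  refine ⟨⟨g3 n, ?_⟩, ?_⟩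
  · intro a b
    simp only [TRC, SimpleGraph.fromRel_adj]
    constructor
    · rintro ⟨hne, h⟩
      exact ⟨fun e => hne (by rw [e]), (g3_rel_iff n a b).mp h⟩
    · rintro ⟨hne, h⟩
      exact ⟨fun e => hne ((g3 n).injective e), (g3_rel_iff n a b).mpr h⟩
  · intro j i
    refine ⟨rfl, rfl, rfl, rfl⟩
end

section
/- The map g₄ defined by v_{j,i}^3 ↦ v_{n-j+1,n-i+1}^0, v_{j,i}^2 ↦ v_{n-j+1,n-i+1}^1, v_{j,i}^1 ↦ v_{n-j+1,n-i+1}^2, v_{j,i}^0 ↦ v_{n-j+1,n-i+1}^3 (indices mod n) is an automorphism of the graph TRC4C8(R)[n,n]. -/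
lemma g4_apply (n : ℕ) (j i : ZMod n) (t : Fin 4) :
    g4 n (j, i, t) = (1 - j, 1 - i, tau t) := rfl

lemma key (n : ℕ) (a b : TV n) (h : baseRel n a b) :
    baseRel n (g4 n b) (g4 n a) := by
  obtain ⟨j, i, h⟩ := h
  rcases h with ⟨rfl, rfl⟩ | ⟨rfl, rfl⟩ | ⟨rfl, rfl⟩ | ⟨rfl, rfl⟩ | ⟨rfl, rfl⟩ | ⟨rfl, rfl⟩ <;>
    simp only [g4_apply] <;> norm_num [tau]
  · exact ⟨1 - j, 1 - i, by tauto⟩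
  · exact ⟨1 - j, 1 - i, by tauto⟩
  · refine ⟨-j, 1 - i, Or.inr (Or.inr (Or.inl ⟨rfl, ?_⟩))⟩
    rw [show (-j + 1 : ZMod n) = 1 - j by ring]
  · exact ⟨1 - j, 1 - i, by tauto⟩
  · refine ⟨1 - j, -i, Or.inr (Or.inr (Or.inr (Or.inr (Or.inl ⟨rfl, ?_⟩))))⟩
    rw [show (-i + 1 : ZMod n) = 1 - i by ring]
  · exact ⟨1 - j, 1 - i, by tauto⟩

lemma g4_inv (n : ℕ) (x : TV n) : g4 n (g4 n x) = x := by
  rcases x with ⟨a, b, c⟩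
  simp only [g4_apply, sub_sub_cancel, Prod.mk.injEq]
  refine ⟨trivial, trivial, ?_⟩; fin_cases c <;> rfl

lemma key2 (n : ℕ) (a b : TV n) (h : (TRC n).Adj a b) :
    (TRC n).Adj (g4 n a) (g4 n b) := by
  obtain ⟨hne, h⟩ := h
  refine ⟨fun e => hne ((g4 n).injective e), ?_⟩
  rcases h with h | h
  · exact Or.inr (key n a b h)
  · exact Or.inl (key n b a h)

/-- g₄ : v_{j,i}^t ↦ v_{1-j,1-i}^{3-t} (note n-j+1 = 1-j in ZMod n) is an
automorphism of TRC4C8(R)[n,n]. -/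
theorem g4_is_automorphism (n : ℕ) :
    ∃ φ : TRC n ≃g TRC n, ∀ (j i : ZMod n),
      φ (j, i, 3) = (1 - j, 1 - i, 0) ∧ φ (j, i, 2) = (1 - j, 1 - i, 1) ∧
      φ (j, i, 1) = (1 - j, 1 - i, 2) ∧ φ (j, i, 0) = (1 - j, 1 - i, 3) := by
  refine ⟨⟨g4 n, fun {a b} => ?_⟩, fun j i => ⟨rfl, rfl, rfl, rfl⟩⟩
  constructor
  · intro h
    have := key2 n _ _ h
    simpa [g4_inv] using this
  · exact key2 n a b
end

section
/- The automorphisms g₁, g₂, g₃, g₄ of TRC4C8(R)[n,n] satisfy the relations g₁g₂ = g₂g₁, g₃g₄ = g₄g₃, g₁g₄ = g₄g₁⁻¹, g₂g₄ = g₄g₂⁻¹, and g₂g₃ = g₃g₁⁻¹. -/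
/-- The relations among g₁, g₂, g₃, g₄. -/
theorem generator_relations (n : ℕ) :
    g1 n * g2 n = g2 n * g1 n ∧
    g3 n * g4 n = g4 n * g3 n ∧
    g1 n * g4 n = g4 n * (g1 n)⁻¹ ∧
    g2 n * g4 n = g4 n * (g2 n)⁻¹ ∧
    g2 n * g3 n = g3 n * (g1 n)⁻¹ := by
  refine ⟨?_, ?_, ?_, ?_, ?_⟩ <;>
  · ext ⟨a, b, c⟩ <;>
    simp [g1, g2, g3, g4, Equiv.Perm.mul_apply, Function.Involutive.toPerm,
      Equiv.Perm.inv_def, Equiv.symm, Prod.ext_iff] <;>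
    (try fin_cases c <;> simp [sig, tau]) <;> ring
end

section
/- The group G = ⟨g₁, g₂, g₃, g₄⟩ is the internal semidirect product of H = ⟨g₁, g₂⟩ ≅ Cₙ × Cₙ by K = ⟨g₃, g₄⟩ ≅ C₂ × C₂; in particular G = HK, H is normal in G, and H ∩ K = 1, so |G| = 4n². -/
/-!
The generators `g1`, `g2` act as the translations `(j, i, t) ↦ (j + b, i - a, t)`, so `H` is the
image of an injective homomorphism from `Cₙ × Cₙ`, and every element of `H` fixes the label `t`.
The generators `g3`, `g4` are commuting involutions, so `K` is the image of a homomorphism from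
`C₂ × C₂`; its four elements send the label `0` of the vertex `(0, 0, 0)` to four different labels,
which gives both its injectivity and `H ∩ K = 1`. Conjugation by `g3` or `g4` carries translations
to translations, so `K` normalizes `H`; hence `G = H ⊔ K = HK` and `|G| = |H| |K|`.
-/

open Subgroup Multiplicative

theorem Subgroup.mem_normalizer_of_mul_self_eq_one {G : Type*} [Group G] {H : Subgroup G}
    {g : G} (hg : g * g = 1) (hconj : ∀ h ∈ H, g * h * g⁻¹ ∈ H) : g ∈ normalizer (H : Set G) := by
  have hinv : g⁻¹ = g := inv_eq_of_mul_eq_one_right hg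
  refine mem_normalizer_iff.mpr fun h => ⟨hconj h, fun hh => ?_⟩
  simpa [hinv, mul_assoc, ← mul_assoc g g, hg] using hconj _ hh

theorem Subgroup.card_sup_of_le_normalizer {G : Type*} [Group G] {H K : Subgroup G}
    (hK : K ≤ normalizer (H : Set G)) (hHK : Disjoint H K) :
    Nat.card ↥(H ⊔ K) = Nat.card H * Nat.card K := by
  have hrange : Set.range (fun g : H × K => (g.1 : G) * g.2) = ↑(H ⊔ K) := by
    rw [coe_mul_of_right_le_normalizer_left H K hK]
    ext; simp [Set.mem_mul]
  rw [← Nat.card_prod, ← Nat.card_range_of_injective (mul_injective_of_disjoint hHK), hrange]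
  rfl

def zmodPowHom {M : Type*} [Monoid M] (n : ℕ) [NeZero n] {x : M} (hx : x ^ n = 1) :
    Multiplicative (ZMod n) →* M where
  toFun a := x ^ a.toAdd.val
  map_one' := by simp
  map_mul' a b := by simp only [toAdd_mul, ZMod.val_add, ← pow_eq_pow_mod _ hx, pow_add]

section

variable (n : ℕ)

def shiftHom : Multiplicative (ZMod n) × Multiplicative (ZMod n) →* Equiv.Perm (TV n) where
  toFun x :=
    ⟨fun p => (p.1 + x.2.toAdd, p.2.1 - x.1.toAdd, p.2.2),
     fun p => (p.1 - x.2.toAdd, p.2.1 + x.1.toAdd, p.2.2),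
     fun p => by simp, fun p => by simp⟩
  map_one' := by ext <;> simp
  map_mul' x y := by ext <;> simp <;> abel

@[simp] theorem shiftHom_apply (x : Multiplicative (ZMod n) × Multiplicative (ZMod n)) (p : TV n) :
    shiftHom n x p = (p.1 + x.2.toAdd, p.2.1 - x.1.toAdd, p.2.2) := rfl

theorem shiftHom_injective : Function.Injective (shiftHom n) := by
  refine (injective_iff_map_eq_one _).mpr fun x hx => ?_
  have h0 := congrArg (· (0 : TV n)) hx
  simp only [shiftHom_apply, Equiv.Perm.coe_one, id, Prod.ext_iff] at h0
  ext <;> simp_all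

theorem shiftHom_ofAdd_one_one : shiftHom n (ofAdd 1, 1) = g1 n := by
  ext <;> simp [g1]

theorem shiftHom_one_ofAdd_one : shiftHom n (1, ofAdd 1) = g2 n := by
  ext <;> simp [g2]

theorem closure_g1_g2 : closure {g1 n, g2 n} = (shiftHom n).range := by
  apply le_antisymm
  · rw [closure_le]
    rintro _ (rfl | rfl)
    exacts [⟨_, shiftHom_ofAdd_one_one n⟩, ⟨_, shiftHom_one_ofAdd_one n⟩]
  · rintro _ ⟨⟨a, b⟩, rfl⟩
    obtain ⟨k, hk⟩ := ZMod.intCast_surjective a.toAdd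
    obtain ⟨l, hl⟩ := ZMod.intCast_surjective b.toAdd
    have hab : ((a, b) : Multiplicative (ZMod n) × Multiplicative (ZMod n)) =
        (ofAdd 1, 1) ^ k * (1, ofAdd 1) ^ l := by
      ext <;> simp [← hk, ← hl]
    rw [hab, map_mul, map_zpow, map_zpow, shiftHom_ofAdd_one_one, shiftHom_one_ofAdd_one]
    exact mul_mem (zpow_mem (subset_closure (by simp)) _) (zpow_mem (subset_closure (by simp)) _)

@[simp] theorem g3_apply_s11 (p : TV n) : g3 n p = (p.2.1, p.1, sig p.2.2) := rfl

@[simp] theorem g4_apply_s11 (p : TV n) : g4 n p = (1 - p.1, 1 - p.2.1, tau p.2.2) := rfl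

-- `Function.Involutive.toPerm f` has `f` itself as inverse, by definition.
theorem g3_sq : g3 n ^ 2 = 1 := by
  rw [sq, mul_eq_one_iff_eq_inv]; rfl

theorem g4_sq : g4 n ^ 2 = 1 := by
  rw [sq, mul_eq_one_iff_eq_inv]; rfl

theorem commute_g3_g4 : Commute (g3 n) (g4 n) := by
  have hsig_tau : ∀ t, sig (tau t) = tau (sig t) := by decide
  ext p <;> simp [Equiv.Perm.mul_apply, hsig_tau]

theorem g3_mul_shiftHom (x : Multiplicative (ZMod n) × Multiplicative (ZMod n)) :
    g3 n * shiftHom n x = shiftHom n (x.2⁻¹, x.1⁻¹) * g3 n := by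
  ext <;> simp [Equiv.Perm.mul_apply, sub_eq_add_neg]

theorem g4_mul_shiftHom (x : Multiplicative (ZMod n) × Multiplicative (ZMod n)) :
    g4 n * shiftHom n x = shiftHom n (x.1⁻¹, x.2⁻¹) * g4 n := by
  ext <;> simp [Equiv.Perm.mul_apply] <;> ring

theorem mem_normalizer_range_shiftHom {g : Equiv.Perm (TV n)} (hg : g ^ 2 = 1)
    (hconj : ∀ x, ∃ y, g * shiftHom n x = shiftHom n y * g) :
    g ∈ normalizer ((shiftHom n).range : Set (Equiv.Perm (TV n))) := by
  refine mem_normalizer_of_mul_self_eq_one (by rwa [← sq]) ?_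
  rintro _ ⟨x, rfl⟩
  obtain ⟨y, hy⟩ := hconj x
  exact ⟨y, by rw [hy, mul_inv_cancel_right]⟩

def flipHom : Multiplicative (ZMod 2) × Multiplicative (ZMod 2) →* Equiv.Perm (TV n) :=
  (zmodPowHom 2 (g3_sq n)).noncommCoprod (zmodPowHom 2 (g4_sq n))
    fun _ _ => (commute_g3_g4 n).pow_pow _ _

theorem flipHom_apply (y : Multiplicative (ZMod 2) × Multiplicative (ZMod 2)) :
    flipHom n y = g3 n ^ y.1.toAdd.val * g4 n ^ y.2.toAdd.val := rfl

theorem closure_g3_g4 : closure {g3 n, g4 n} = (flipHom n).range := by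
  apply le_antisymm
  · rw [closure_le]
    rintro _ (rfl | rfl)
    exacts [⟨(ofAdd 1, 1), by simp [flipHom_apply, ZMod.val_one]⟩,
      ⟨(1, ofAdd 1), by simp [flipHom_apply, ZMod.val_one]⟩]
  · rintro _ ⟨y, rfl⟩
    rw [flipHom_apply]
    exact mul_mem (pow_mem (subset_closure (by simp)) _) (pow_mem (subset_closure (by simp)) _)

theorem eq_one_of_flipHom_apply_zero_label {y : Multiplicative (ZMod 2) × Multiplicative (ZMod 2)}
    (hy : (flipHom n y 0).2.2 = 0) : y = 1 := by
  obtain ⟨a, b⟩ := y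
  have hcases : ∀ c : ZMod 2, c = 0 ∨ c = 1 := by decide
  rcases hcases a.toAdd with ha | ha <;> rcases hcases b.toAdd with hb | hb <;>
    simp_all [flipHom_apply, ZMod.val_one, sig, tau]

theorem flipHom_injective : Function.Injective (flipHom n) :=
  (injective_iff_map_eq_one _).mpr fun _ hy =>
    eq_one_of_flipHom_apply_zero_label n (by rw [hy]; rfl)

theorem range_shiftHom_inf_range_flipHom : (shiftHom n).range ⊓ (flipHom n).range = ⊥ := by
  refine eq_bot_iff.mpr fun g ⟨⟨x, hx⟩, ⟨y, hy⟩⟩ => ?_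
  have hlabel : (flipHom n y 0).2.2 = 0 := by rw [hy, ← hx]; rfl
  rw [mem_bot, ← hy, eq_one_of_flipHom_apply_zero_label n hlabel, map_one]

theorem range_flipHom_le_normalizer :
    (flipHom n).range ≤ normalizer ((shiftHom n).range : Set (Equiv.Perm (TV n))) := by
  rw [← closure_g3_g4, closure_le]
  rintro _ (rfl | rfl)
  · exact mem_normalizer_range_shiftHom n (g3_sq n) fun x => ⟨_, g3_mul_shiftHom n x⟩
  · exact mem_normalizer_range_shiftHom n (g4_sq n) fun x => ⟨_, g4_mul_shiftHom n x⟩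

theorem closure_g1_g2_g3_g4 :
    closure {g1 n, g2 n, g3 n, g4 n} = (shiftHom n).range ⊔ (flipHom n).range := by
  rw [← closure_g1_g2, ← closure_g3_g4, ← Subgroup.closure_union, Set.insert_union,
    Set.singleton_union]

end

theorem G_semidirect_general (n : ℕ) :
    ((Subgroup.closure {g1 n, g2 n}).subgroupOf
      (Subgroup.closure {g1 n, g2 n, g3 n, g4 n} : Subgroup (Equiv.Perm (TV n)))).Normal ∧
    (∀ g ∈ (Subgroup.closure {g1 n, g2 n, g3 n, g4 n} : Subgroup (Equiv.Perm (TV n))),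
      ∃ h ∈ Subgroup.closure {g1 n, g2 n}, ∃ k ∈ Subgroup.closure {g3 n, g4 n}, g = h * k) ∧
    (Subgroup.closure {g1 n, g2 n} : Subgroup (Equiv.Perm (TV n))) ⊓
      Subgroup.closure {g3 n, g4 n} = ⊥ ∧
    Nonempty ((Subgroup.closure {g1 n, g2 n} : Subgroup (Equiv.Perm (TV n))) ≃*
      Multiplicative (ZMod n) × Multiplicative (ZMod n)) ∧
    Nonempty ((Subgroup.closure {g3 n, g4 n} : Subgroup (Equiv.Perm (TV n))) ≃*
      Multiplicative (ZMod 2) × Multiplicative (ZMod 2)) ∧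
    Nat.card (Subgroup.closure {g1 n, g2 n, g3 n, g4 n} : Subgroup (Equiv.Perm (TV n)))
      = 4 * n ^ 2 := by
  have hnorm := range_flipHom_le_normalizer n
  have hdisj := range_shiftHom_inf_range_flipHom n
  rw [closure_g1_g2_g3_g4, closure_g1_g2, closure_g3_g4]
  refine ⟨(normal_subgroupOf_iff_le_normalizer le_sup_left).mpr (sup_le le_normalizer hnorm),
    fun g hg => ?_, hdisj, ⟨(MonoidHom.ofInjective (shiftHom_injective n)).symm⟩,
    ⟨(MonoidHom.ofInjective (flipHom_injective n)).symm⟩, ?_⟩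
  · rw [← SetLike.mem_coe, coe_mul_of_right_le_normalizer_left _ _ hnorm] at hg
    obtain ⟨h, hh, k, hk, rfl⟩ := hg
    exact ⟨h, hh, k, hk, rfl⟩
  · rw [card_sup_of_le_normalizer hnorm (disjoint_iff.mpr hdisj),
      ← Nat.card_congr (MonoidHom.ofInjective (shiftHom_injective n)).toEquiv,
      ← Nat.card_congr (MonoidHom.ofInjective (flipHom_injective n)).toEquiv]
    have hcard (m : ℕ) : Nat.card (Multiplicative (ZMod m)) = m :=
      (Nat.card_congr toAdd).trans (Nat.card_zmod m)
    rw [Nat.card_prod, Nat.card_prod, hcard, hcard]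
    ring

/-- G = H ⋊ K: G = HK, H ⊴ G, H ∩ K = 1, H ≅ Cₙ × Cₙ, K ≅ C₂ × C₂, |G| = 4n². -/
theorem G_semidirect (n : ℕ) (hn : 2 ≤ n) :
    ((Subgroup.closure {g1 n, g2 n}).subgroupOf
      (Subgroup.closure {g1 n, g2 n, g3 n, g4 n} : Subgroup (Equiv.Perm (TV n)))).Normal ∧
    (∀ g ∈ (Subgroup.closure {g1 n, g2 n, g3 n, g4 n} : Subgroup (Equiv.Perm (TV n))),
      ∃ h ∈ Subgroup.closure {g1 n, g2 n}, ∃ k ∈ Subgroup.closure {g3 n, g4 n}, g = h * k) ∧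
    (Subgroup.closure {g1 n, g2 n} : Subgroup (Equiv.Perm (TV n))) ⊓
      Subgroup.closure {g3 n, g4 n} = ⊥ ∧
    Nonempty ((Subgroup.closure {g1 n, g2 n} : Subgroup (Equiv.Perm (TV n))) ≃*
      Multiplicative (ZMod n) × Multiplicative (ZMod n)) ∧
    Nonempty ((Subgroup.closure {g3 n, g4 n} : Subgroup (Equiv.Perm (TV n))) ≃*
      Multiplicative (ZMod 2) × Multiplicative (ZMod 2)) ∧
    Nat.card (Subgroup.closure {g1 n, g2 n, g3 n, g4 n} : Subgroup (Equiv.Perm (TV n)))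
      = 4 * n ^ 2 :=
  G_semidirect_general n
end

section
/- The group G = ⟨g₁, g₂, g₃, g₄⟩ acts transitively on the vertex set of TRC4C8(R)[n,n]: for any vertices v_{j,i}^t and v_{j',i'}^{t'} there is g ∈ G with g(v_{j,i}^t) = v_{j',i'}^{t'}. -/
lemma g1_inv_pow (n k : ℕ) (p : TV n) : ((g1 n)⁻¹ ^ k) p = (p.1, p.2.1 + k, p.2.2) := by
  induction k generalizing p with
  | zero => simp
  | succ m ih =>
    rw [pow_succ, Equiv.Perm.mul_apply]
    show ((g1 n)⁻¹ ^ m) (p.1, p.2.1 + 1, p.2.2) = _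
    rw [ih]
    push_cast
    refine Prod.ext rfl (Prod.ext ?_ rfl)
    simp only
    ring

lemma g2_pow (n k : ℕ) (p : TV n) : ((g2 n) ^ k) p = (p.1 + k, p.2.1, p.2.2) := by
  induction k generalizing p with
  | zero => simp
  | succ m ih =>
    rw [pow_succ, Equiv.Perm.mul_apply]
    show ((g2 n) ^ m) (p.1 + 1, p.2.1, p.2.2) = _
    rw [ih]
    push_cast
    refine Prod.ext ?_ rfl
    simp only
    ring

lemma g1_inv_zpow (n : ℕ) (z : ℤ) (p : TV n) :
    ((g1 n)⁻¹ ^ z) p = (p.1, p.2.1 + z, p.2.2) := by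
  obtain ⟨k, rfl | rfl⟩ := Int.eq_nat_or_neg z
  · rw [zpow_natCast, g1_inv_pow]; push_cast; rfl
  · rw [zpow_neg, zpow_natCast, Equiv.Perm.inv_def, Equiv.symm_apply_eq, g1_inv_pow]
    refine Prod.ext rfl (Prod.ext ?_ rfl)
    simp only
    push_cast
    ring

lemma g2_zpow (n : ℕ) (z : ℤ) (p : TV n) :
    ((g2 n) ^ z) p = (p.1 + z, p.2.1, p.2.2) := by
  obtain ⟨k, rfl | rfl⟩ := Int.eq_nat_or_neg z
  · rw [zpow_natCast, g2_pow]; push_cast; rfl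
  · rw [zpow_neg, zpow_natCast, Equiv.Perm.inv_def, Equiv.symm_apply_eq, g2_pow]
    refine Prod.ext ?_ rfl
    simp only
    push_cast
    ring

def hh (n : ℕ) : Fin 4 → Equiv.Perm (TV n)
  | 0 => 1
  | 1 => g3 n
  | 2 => g3 n * ((g2 n)⁻¹ * (g1 n * g4 n))
  | 3 => (g2 n)⁻¹ * (g1 n * g4 n)

lemma hh_mem (n : ℕ) (t : Fin 4) :
    hh n t ∈ (Subgroup.closure {g1 n, g2 n, g3 n, g4 n} : Subgroup (Equiv.Perm (TV n))) := by
  have h1 : g1 n ∈ _ := Subgroup.subset_closure (by simp : g1 n ∈ ({g1 n, g2 n, g3 n, g4 n} : Set _))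
  have h2 : g2 n ∈ _ := Subgroup.subset_closure (by simp : g2 n ∈ ({g1 n, g2 n, g3 n, g4 n} : Set _))
  have h3 : g3 n ∈ _ := Subgroup.subset_closure (by simp : g3 n ∈ ({g1 n, g2 n, g3 n, g4 n} : Set _))
  have h4 : g4 n ∈ _ := Subgroup.subset_closure (by simp : g4 n ∈ ({g1 n, g2 n, g3 n, g4 n} : Set _))
  fin_cases t
  · exact one_mem _
  · exact h3
  · exact mul_mem h3 (mul_mem (inv_mem h2) (mul_mem h1 h4))
  · exact mul_mem (inv_mem h2) (mul_mem h1 h4)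

lemma hh_apply (n : ℕ) (t : Fin 4) : hh n t ((0 : ZMod n), (0 : ZMod n), (0 : Fin 4)) = (0, 0, t) := by
  fin_cases t
  · rfl
  · rfl
  · show (g3 n) ((g2 n)⁻¹ ((g1 n) ((g4 n) (0,0,0)))) = _
    have e4 : (g4 n) ((0:ZMod n), (0:ZMod n), (0:Fin 4)) = (1, 1, 3) := by
      simp [g4, Function.Involutive.toPerm]; rfl
    rw [e4]
    have e1 : (g1 n) ((1:ZMod n), (1:ZMod n), (3:Fin 4)) = (1, 0, 3) := by
      simp [g1]
    rw [e1]
    have e2 : (g2 n)⁻¹ ((1:ZMod n), (0:ZMod n), (3:Fin 4)) = (0, 0, 3) := by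
      show ((1:ZMod n) - 1, (0:ZMod n), (3:Fin 4)) = _
      simp
    rw [e2]
    rfl
  · show (g2 n)⁻¹ ((g1 n) ((g4 n) (0,0,0))) = _
    have e4 : (g4 n) ((0:ZMod n), (0:ZMod n), (0:Fin 4)) = (1, 1, 3) := by
      simp [g4, Function.Involutive.toPerm]; rfl
    rw [e4]
    have e1 : (g1 n) ((1:ZMod n), (1:ZMod n), (3:Fin 4)) = (1, 0, 3) := by
      simp [g1]
    rw [e1]
    show ((1:ZMod n) - 1, (0:ZMod n), (3:Fin 4)) = _
    simp

lemma exists_from_origin (n : ℕ) (v : TV n) :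
    ∃ g ∈ (Subgroup.closure {g1 n, g2 n, g3 n, g4 n} : Subgroup (Equiv.Perm (TV n))),
      g ((0 : ZMod n), (0 : ZMod n), (0 : Fin 4)) = v := by
  obtain ⟨j, i, t⟩ := v
  obtain ⟨zj, hzj⟩ := ZMod.intCast_surjective j
  obtain ⟨zi, hzi⟩ := ZMod.intCast_surjective i
  have h1 : g1 n ∈ _ := Subgroup.subset_closure (by simp : g1 n ∈ ({g1 n, g2 n, g3 n, g4 n} : Set _))
  have h2 : g2 n ∈ _ := Subgroup.subset_closure (by simp : g2 n ∈ ({g1 n, g2 n, g3 n, g4 n} : Set _))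
  refine ⟨(g2 n) ^ zj * ((g1 n)⁻¹ ^ zi * hh n t),
    mul_mem (zpow_mem h2 zj) (mul_mem (zpow_mem (inv_mem h1) zi) (hh_mem n t)), ?_⟩
  rw [Equiv.Perm.mul_apply, Equiv.Perm.mul_apply, hh_apply, g1_inv_zpow, g2_zpow]
  simp [hzj, hzi]

/-- G = ⟨g₁, g₂, g₃, g₄⟩ acts transitively on the vertices. -/
theorem G_transitive (n : ℕ) :
    ∀ u v : TV n, ∃ g ∈ (Subgroup.closure {g1 n, g2 n, g3 n, g4 n} :
      Subgroup (Equiv.Perm (TV n))), g u = v := by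
  intro u v
  obtain ⟨gu, hgu, hgu0⟩ := exists_from_origin n u
  obtain ⟨gv, hgv, hgv0⟩ := exists_from_origin n v
  refine ⟨gv * gu⁻¹, mul_mem hgv (inv_mem hgu), ?_⟩
  rw [Equiv.Perm.mul_apply]
  have h0 : gu⁻¹ u = ((0 : ZMod n), (0 : ZMod n), (0 : Fin 4)) := by
    rw [← hgu0]; exact Equiv.symm_apply_apply _ _
  rw [h0, hgv0]
end

section
/- The group G = ⟨g₁, g₂, g₃, g₄⟩ acts freely on the vertex set of TRC4C8(R)[n,n]: if g ∈ G fixes some vertex, then g is the identity. Equivalently, since |G| = 4n² equals the number of vertices and the action is transitive, G acts regularly. -/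
/-!
Every generator acts as `(x, t) ↦ (L x + c, φ t)` with `x = (j, i)`, where the pair `(L, φ)` is one
of `(id, id)`, `(swap, sig)`, `(-id, tau)`, `(-swap, sig ∘ tau)`; these pairs form a Klein four-group,
so such maps are closed under composition and inversion and `G` consists of them. A vertex fixed
by such a map has `φ t = t`, which forces `φ = id` (the other three permutations of `Fin 4` are
fixed-point free), hence `L = id`, and then `x + c = x` gives `c = 0`.
-/

section KleinAffine

variable {A : Type*} [AddCommGroup A]

def kleinLinear (s e : Bool) (p : A × A) : A × A :=
  if e then -(if s then p.swap else p) else (if s then p.swap else p)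

def kleinType (s e : Bool) (t : Fin 4) : Fin 4 :=
  (if s then sig else id) ((if e then tau else id) t)

def kleinAffine (c : A × A) (s e : Bool) (v : A × A × Fin 4) : A × A × Fin 4 :=
  ((kleinLinear s e (v.1, v.2.1) + c).1, (kleinLinear s e (v.1, v.2.1) + c).2, kleinType s e v.2.2)

@[simp]
lemma kleinLinear_false_false (p : A × A) : kleinLinear false false p = p := rfl

lemma kleinLinear_add (s e : Bool) (p q : A × A) :
    kleinLinear s e (p + q) = kleinLinear s e p + kleinLinear s e q := by
  cases s <;> cases e <;> simp [kleinLinear, add_comm]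

lemma kleinLinear_neg (s e : Bool) (p : A × A) : kleinLinear s e (-p) = -kleinLinear s e p := by
  cases s <;> cases e <;> simp [kleinLinear]

lemma kleinLinear_kleinLinear (s e s' e' : Bool) (p : A × A) :
    kleinLinear s e (kleinLinear s' e' p) = kleinLinear (s ^^ s') (e ^^ e') p := by
  cases s <;> cases e <;> cases s' <;> cases e' <;> simp [kleinLinear]

lemma kleinType_kleinType (s e s' e' : Bool) (t : Fin 4) :
    kleinType s e (kleinType s' e' t) = kleinType (s ^^ s') (e ^^ e') t := by
  revert s e s' e' t; decide

lemma kleinType_eq_self_iff (s e : Bool) (t : Fin 4) :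
    kleinType s e t = t ↔ s = false ∧ e = false := by
  revert s e t; decide

lemma kleinAffine_comp (c c' : A × A) (s e s' e' : Bool) :
    kleinAffine c s e ∘ kleinAffine c' s' e' =
      kleinAffine (kleinLinear s e c' + c) (s ^^ s') (e ^^ e') := by
  funext v
  simp only [kleinAffine, Function.comp_apply, Prod.mk.eta, kleinLinear_add,
    kleinLinear_kleinLinear, kleinType_kleinType, add_assoc]

lemma kleinAffine_zero : kleinAffine (0 : A × A) false false = id := by
  funext v
  simp [kleinAffine, kleinType]

variable (A) in
def kleinAffineSubgroup : Subgroup (Equiv.Perm (A × A × Fin 4)) where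
  carrier := {g | ∃ c s e, ⇑g = kleinAffine c s e}
  mul_mem' := by
    rintro g h ⟨c, s, e, hg⟩ ⟨c', s', e', hh⟩
    exact ⟨_, _, _, by rw [Equiv.Perm.coe_mul, hg, hh, kleinAffine_comp]⟩
  one_mem' := ⟨0, false, false, by rw [kleinAffine_zero]; rfl⟩
  inv_mem' := by
    rintro g ⟨c, s, e, hg⟩
    refine ⟨-kleinLinear s e c, s, e, funext fun v => ?_⟩
    have hid : ⇑g ∘ kleinAffine (-kleinLinear s e c) s e = id := by
      rw [hg, kleinAffine_comp, kleinLinear_neg, kleinLinear_kleinLinear, Bool.xor_self,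
        Bool.xor_self, kleinLinear_false_false, neg_add_cancel, kleinAffine_zero]
    exact g.symm_apply_eq.mpr (congrFun hid v).symm

lemma eq_one_of_mem_kleinAffineSubgroup_of_apply_eq {g : Equiv.Perm (A × A × Fin 4)}
    (hg : g ∈ kleinAffineSubgroup A) {v : A × A × Fin 4} (hv : g v = v) : g = 1 := by
  obtain ⟨c, s, e, hg⟩ := hg
  obtain ⟨x, y, t⟩ := v
  rw [hg] at hv
  simp only [kleinAffine, Prod.mk.injEq] at hv
  obtain ⟨hx, hy, ht⟩ := hv
  obtain ⟨rfl, rfl⟩ := (kleinType_eq_self_iff s e t).mp ht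
  have hc : c = 0 := by
    ext
    · simpa using hx
    · simpa using hy
  exact Equiv.ext fun w => by rw [hg, hc, kleinAffine_zero]; rfl

end KleinAffine

lemma closure_generators_le_kleinAffineSubgroup (n : ℕ) :
    Subgroup.closure {g1 n, g2 n, g3 n, g4 n} ≤ kleinAffineSubgroup (ZMod n) := by
  rw [Subgroup.closure_le]
  rintro g (rfl | rfl | rfl | rfl)
  · exact ⟨(0, -1), false, false, by
      funext v; simp [g1, kleinAffine, kleinType, sub_eq_add_neg]⟩
  · exact ⟨(1, 0), false, false, by funext v; simp [g2, kleinAffine, kleinType]⟩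
  · exact ⟨0, true, false, by
      funext v; simp [g3, Function.Involutive.toPerm, kleinAffine, kleinLinear, kleinType]⟩
  · exact ⟨(1, 1), false, true, by
      funext v
      simp [g4, Function.Involutive.toPerm, kleinAffine, kleinLinear, kleinType, sub_eq_neg_add]⟩

theorem G_free_general (n : ℕ) :
    ∀ g ∈ (Subgroup.closure {g1 n, g2 n, g3 n, g4 n} : Subgroup (Equiv.Perm (TV n))),
      ∀ v : TV n, g v = v → g = 1 :=
  fun _ hg _ hv => eq_one_of_mem_kleinAffineSubgroup_of_apply_eq
    (closure_generators_le_kleinAffineSubgroup n hg) hv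

/-- G acts freely: any element of G fixing a vertex is the identity. -/
theorem G_free (n : ℕ) (hn : 1 ≤ n) :
    ∀ g ∈ (Subgroup.closure {g1 n, g2 n, g3 n, g4 n} : Subgroup (Equiv.Perm (TV n))),
      ∀ v : TV n, g v = v → g = 1 :=
  G_free_general n
end

section
/- For every n ≥ 2, the rhomboidal C4C8 torus TRC4C8(R)[n,n] is a Cayley graph; specifically, it is isomorphic to a Cayley graph of the group (Cₙ × Cₙ) ⋊ (C₂ × C₂) of order 4n². -/
/-- The Cayley graph of a group `G` with connection set `S`. -/
def CayleyGraph (G : Type) [Group G] (S : Set G) : SimpleGraph G :=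
  SimpleGraph.fromRel (fun g h => ∃ s ∈ S, h = s * g)

/-!
The edges of `TRC n` split into three perfect matchings: `0 ↔ 1, 2 ↔ 3` and `0 ↔ 2, 1 ↔ 3`
inside each 4-cycle cell, and the edges between neighbouring cells. Label the vertex `(j, i, t)`
by `⟨(j, i), κ t⟩ ∈ (Cₙ × Cₙ) ⋊ (C₂ × C₂)`, where `κ` sends `t = 0, 1, 2, 3` to the identity,
the swap, swap-and-invert and the inversion of `Cₙ × Cₙ`. Then the three matchings become right
multiplication by the involutions `⟨0, swap⟩`, `⟨0, swap * inv⟩` and `⟨(1, 0), inv⟩`, so adjacency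
reads `g⁻¹ * h ∈ S`; inversion `g ↦ g⁻¹` turns this right Cayley graph into the left Cayley graph
of `S⁻¹ = S`.
-/

open Multiplicative

theorem Multiplicative.eq_one_or_eq_ofAdd_one (x : Multiplicative (ZMod 2)) :
    x = 1 ∨ x = ofAdd 1 := by
  revert x; decide

theorem Multiplicative.ofAdd_one_mul_ofAdd_one :
    (ofAdd 1 : Multiplicative (ZMod 2)) * ofAdd 1 = 1 := rfl

section Involution

variable {M : Type*} [Monoid M]

def involutionHom (σ : M) (hσ : σ * σ = 1) : Multiplicative (ZMod 2) →* M where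
  toFun x := if x = 1 then 1 else σ
  map_one' := if_pos rfl
  map_mul' x y := by
    rcases eq_one_or_eq_ofAdd_one x with rfl | rfl <;>
      rcases eq_one_or_eq_ofAdd_one y with rfl | rfl <;>
      simp [hσ, ofAdd_one_mul_ofAdd_one]

theorem commute_involutionHom {σ τ : M} (hσ : σ * σ = 1) (hτ : τ * τ = 1) (h : Commute σ τ)
    (x y : Multiplicative (ZMod 2)) : Commute (involutionHom σ hσ x) (involutionHom τ hτ y) := by
  simp only [involutionHom, MonoidHom.coe_mk, OneHom.coe_mk]
  split_ifs <;> simp [h]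

end Involution

def swapInvHom (A : Type*) [CommGroup A] :
    Multiplicative (ZMod 2) × Multiplicative (ZMod 2) →* MulAut (A × A) :=
  MonoidHom.noncommCoprod (involutionHom MulEquiv.prodComm (by ext <;> rfl))
    (involutionHom (MulEquiv.inv (A × A)) (by ext <;> simp))
    (commute_involutionHom _ _ (by ext <;> rfl))

section CayleyGraph

variable {V G : Type} [Group G] {Γ : SimpleGraph V} {S : Set G} (e : V ≃ G)

theorem cayleyGraph_adj_iff (h1 : (1 : G) ∉ S) (hS : ∀ s ∈ S, s⁻¹ ∈ S) {g h : G} :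
    (CayleyGraph G S).Adj g h ↔ h * g⁻¹ ∈ S := by
  simp only [CayleyGraph, SimpleGraph.fromRel_adj]
  constructor
  · rintro ⟨-, ⟨s, hs, rfl⟩ | ⟨s, hs, rfl⟩⟩
    · simpa using hs
    · simpa using hS s hs
  · intro hmem
    exact ⟨fun hgh => h1 (by simpa [hgh] using hmem), Or.inl ⟨_, hmem, by group⟩⟩

theorem one_notMem_of_adj_iff (he : ∀ p q, Γ.Adj p q ↔ (e p)⁻¹ * e q ∈ S) : (1 : G) ∉ S :=
  fun h1 => Γ.irrefl (v := e.symm 1) ((he _ _).2 (by simpa using h1))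

theorem inv_mem_iff_of_adj_iff (he : ∀ p q, Γ.Adj p q ↔ (e p)⁻¹ * e q ∈ S) {s : G} :
    s⁻¹ ∈ S ↔ s ∈ S := by
  have inv_mem : ∀ s ∈ S, s⁻¹ ∈ S := fun s hs => by
    have hadj : Γ.Adj (e.symm 1) (e.symm s) := (he _ _).2 (by simpa using hs)
    simpa using (he _ _).1 hadj.symm
  exact ⟨fun h => by simpa using inv_mem _ h, inv_mem s⟩

def isoCayleyGraph (he : ∀ p q, Γ.Adj p q ↔ (e p)⁻¹ * e q ∈ S) : Γ ≃g CayleyGraph G S where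
  toEquiv := e.trans (Equiv.inv G)
  map_rel_iff' {p q} := by
    change (CayleyGraph G S).Adj (e p)⁻¹ (e q)⁻¹ ↔ Γ.Adj p q
    rw [cayleyGraph_adj_iff (one_notMem_of_adj_iff e he) fun s => (inv_mem_iff_of_adj_iff e he).2,
      inv_inv, he, ← inv_mem_iff_of_adj_iff e he (s := (e p)⁻¹ * e q), mul_inv_rev, inv_inv]

end CayleyGraph

abbrev TRCGroup (n : ℕ) :=
  (Multiplicative (ZMod n) × Multiplicative (ZMod n)) ⋊[swapInvHom (Multiplicative (ZMod n))]
    (Multiplicative (ZMod 2) × Multiplicative (ZMod 2))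

theorem card_TRCGroup (n : ℕ) : Nat.card (TRCGroup n) = 4 * n ^ 2 := by
  have card_cyclic (m : ℕ) : Nat.card (Multiplicative (ZMod m)) = m :=
    (Nat.card_congr toAdd).trans (Nat.card_zmod m)
  simp only [SemidirectProduct.card, Nat.card_prod, card_cyclic]
  ring

namespace TRC

variable {n : ℕ}

def flipA (p : TV n) : TV n := (p.1, p.2.1, sig p.2.2)

def flipB (p : TV n) : TV n := (p.1, p.2.1, ![2, 3, 0, 1] p.2.2)

def hop : TV n → TV n
  | (j, i, 0) => (j + 1, i, 3)
  | (j, i, 1) => (j, i + 1, 2)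
  | (j, i, 2) => (j, i - 1, 1)
  | (j, i, 3) => (j - 1, i, 0)

theorem adj_iff {p q : TV n} : (TRC n).Adj p q ↔ q = flipA p ∨ q = flipB p ∨ q = hop p := by
  simp only [TRC, SimpleGraph.fromRel_adj, baseRel]
  constructor
  · rintro ⟨-, ⟨j, i, h⟩ | ⟨j, i, h⟩⟩ <;>
      rcases h with ⟨rfl, rfl⟩ | ⟨rfl, rfl⟩ | ⟨rfl, rfl⟩ | ⟨rfl, rfl⟩ | ⟨rfl, rfl⟩ | ⟨rfl, rfl⟩ <;>
      simp [flipA, flipB, hop, sig]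
  · obtain ⟨j, i, t⟩ := p
    fin_cases t <;> rintro (rfl | rfl | rfl) <;> simp [flipA, flipB, hop, sig]

noncomputable def cellLabel : Fin 4 ≃ Multiplicative (ZMod 2) × Multiplicative (ZMod 2) :=
  Equiv.ofBijective ![1, (ofAdd 1, 1), (ofAdd 1, ofAdd 1), (1, ofAdd 1)] (by decide)

noncomputable def vertexEquiv (n : ℕ) : TV n ≃ TRCGroup n :=
  (Equiv.prodAssoc _ _ _).symm.trans <|
    (Equiv.prodCongr (Equiv.prodCongr ofAdd ofAdd) cellLabel).trans SemidirectProduct.equivProd.symm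

@[simp]
theorem vertexEquiv_apply (j i : ZMod n) (t : Fin 4) :
    vertexEquiv n (j, i, t) = ⟨(ofAdd j, ofAdd i), cellLabel t⟩ := rfl

def genA (n : ℕ) : TRCGroup n := ⟨1, (ofAdd 1, 1)⟩

def genB (n : ℕ) : TRCGroup n := ⟨1, (ofAdd 1, ofAdd 1)⟩

def genC (n : ℕ) : TRCGroup n := ⟨(ofAdd 1, 1), (1, ofAdd 1)⟩

def gens (n : ℕ) : Set (TRCGroup n) := {genA n, genB n, genC n}

theorem vertexEquiv_flipA (p : TV n) : vertexEquiv n (flipA p) = vertexEquiv n p * genA n := by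
  obtain ⟨j, i, t⟩ := p
  refine SemidirectProduct.ext ?_ ?_
  · rw [SemidirectProduct.mul_left]
    simp [flipA, genA]
  · rw [SemidirectProduct.mul_right]
    fin_cases t <;> simp [flipA, genA, cellLabel, sig] <;> decide

theorem vertexEquiv_flipB (p : TV n) : vertexEquiv n (flipB p) = vertexEquiv n p * genB n := by
  obtain ⟨j, i, t⟩ := p
  refine SemidirectProduct.ext ?_ ?_
  · rw [SemidirectProduct.mul_left]
    simp [flipB, genB]
  · rw [SemidirectProduct.mul_right]
    fin_cases t <;> simp [flipB, genB, cellLabel] <;> decide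

theorem vertexEquiv_hop (p : TV n) : vertexEquiv n (hop p) = vertexEquiv n p * genC n := by
  obtain ⟨j, i, t⟩ := p
  refine SemidirectProduct.ext ?_ ?_
  · rw [SemidirectProduct.mul_left]
    fin_cases t <;>
      simp [hop, genC, cellLabel, swapInvHom, involutionHom, ofAdd_sub, ofAdd_add, div_eq_mul_inv]
  · rw [SemidirectProduct.mul_right]
    fin_cases t <;> simp [hop, genC, cellLabel] <;> decide

theorem adj_iff_inv_mul_mem_gens (p q : TV n) :
    (TRC n).Adj p q ↔ (vertexEquiv n p)⁻¹ * vertexEquiv n q ∈ gens n := by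
  simp only [adj_iff, gens, Set.mem_insert_iff, Set.mem_singleton_iff, inv_mul_eq_iff_eq_mul,
    ← vertexEquiv_flipA, ← vertexEquiv_flipB, ← vertexEquiv_hop, (vertexEquiv n).apply_eq_iff_eq]

end TRC

theorem trc_is_cayley_general (n : ℕ) :
    ∃ (G : Type) (_ : Group G) (S : Set G)
      (φ : Multiplicative (ZMod 2) × Multiplicative (ZMod 2) →*
        MulAut (Multiplicative (ZMod n) × Multiplicative (ZMod n))),
      (1 : G) ∉ S ∧ (∀ s ∈ S, s⁻¹ ∈ S) ∧
      Nonempty (TRC n ≃g CayleyGraph G S) ∧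
      Nonempty (G ≃* (Multiplicative (ZMod n) × Multiplicative (ZMod n)) ⋊[φ]
        (Multiplicative (ZMod 2) × Multiplicative (ZMod 2))) ∧
      Nat.card G = 4 * n ^ 2 := by
  have hadj := TRC.adj_iff_inv_mul_mem_gens (n := n)
  exact ⟨TRCGroup n, inferInstance, TRC.gens n, swapInvHom _, one_notMem_of_adj_iff _ hadj,
    fun _ => (inv_mem_iff_of_adj_iff _ hadj).2, ⟨isoCayleyGraph _ hadj⟩, ⟨MulEquiv.refl _⟩,
    card_TRCGroup n⟩

/-- For every n ≥ 2, TRC4C8(R)[n,n] is a Cayley graph of a group isomorphic to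
(Cₙ × Cₙ) ⋊ (C₂ × C₂), of order 4n². -/
theorem trc_is_cayley (n : ℕ) (hn : 2 ≤ n) :
    ∃ (G : Type) (_ : Group G) (S : Set G)
      (φ : Multiplicative (ZMod 2) × Multiplicative (ZMod 2) →*
        MulAut (Multiplicative (ZMod n) × Multiplicative (ZMod n))),
      (1 : G) ∉ S ∧ (∀ s ∈ S, s⁻¹ ∈ S) ∧
      Nonempty (TRC n ≃g CayleyGraph G S) ∧
      Nonempty (G ≃* (Multiplicative (ZMod n) × Multiplicative (ZMod n)) ⋊[φ]
        (Multiplicative (ZMod 2) × Multiplicative (ZMod 2))) ∧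
      Nat.card G = 4 * n ^ 2 :=
  trc_is_cayley_general n
end

section
/- Every element g of the group G = ⟨g₁, g₂, g₃, g₄ | g₁ⁿ = g₂ⁿ = g₃² = g₄² = 1, g₁g₂ = g₂g₁, g₃g₄ = g₄g₃, g₁g₄ = g₄g₁⁻¹, g₂g₄ = g₄g₂⁻¹, g₂g₃ = g₃g₁⁻¹⟩ can be written as g = g₁^{a} g₂^{b} g₃^{c} g₄^{d} with a, b ∈ ℤ/n and c, d ∈ {0,1}; in particular |G| ≤ 4n². -/
/-- In any group generated by a, b, c, d subject to the relations
aⁿ = bⁿ = c² = d² = 1, ab = ba, cd = dc, ad = da⁻¹, bd = db⁻¹, bc = ca⁻¹,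
every element of ⟨a,b,c,d⟩ has a normal form a^x b^y c^e d^f with
x, y ∈ {0,…,n-1} and e, f ∈ {0,1}; in particular the group has order ≤ 4n². -/
theorem normal_form (n : ℕ) (hn : 1 ≤ n) {G : Type*} [Group G] (a b c d : G)
    (ha : a ^ n = 1) (hb : b ^ n = 1) (hc : c ^ 2 = 1) (hd : d ^ 2 = 1)
    (hab : a * b = b * a) (hcd : c * d = d * c)
    (had : a * d = d * a⁻¹) (hbd : b * d = d * b⁻¹) (hbc : b * c = c * a⁻¹) :
    (∀ g ∈ Subgroup.closure {a, b, c, d}, ∃ x y e f : ℕ,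
      x < n ∧ y < n ∧ e < 2 ∧ f < 2 ∧ g = a ^ x * b ^ y * c ^ e * d ^ f) ∧
    Nat.card (Subgroup.closure {a, b, c, d} : Subgroup G) ≤ 4 * n ^ 2 := by
  have hcinv : c⁻¹ = c := inv_eq_of_mul_eq_one_left (by rw [← sq, hc])
  have hdinv : d⁻¹ = d := inv_eq_of_mul_eq_one_left (by rw [← sq, hd])
  -- basic conjugation relations
  have hdad : d * a * d = a⁻¹ := by
    rw [mul_assoc, had, ← mul_assoc, ← sq, hd, one_mul]
  have hdbd : d * b * d = b⁻¹ := by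
    rw [mul_assoc, hbd, ← mul_assoc, ← sq, hd, one_mul]
  have hcbc : c * b * c = a⁻¹ := by
    rw [mul_assoc, hbc, ← mul_assoc, ← sq, hc, one_mul]
  have hcc : c * c = 1 := by rw [← sq, hc]
  have hdd : d * d = 1 := by rw [← sq, hd]
  have hcac : c * a * c = b⁻¹ := by
    have h2 : a = c * b⁻¹ * c := by
      have h3 : a⁻¹ = c * b * c := hcbc.symm
      calc a = (a⁻¹)⁻¹ := (inv_inv a).symm
        _ = (c * b * c)⁻¹ := by rw [h3]
        _ = c⁻¹ * b⁻¹ * c⁻¹ := by group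
        _ = c * b⁻¹ * c := by rw [hcinv]
    calc c * a * c = c * (c * b⁻¹ * c) * c := by rw [← h2]
      _ = (c * c) * b⁻¹ * (c * c) := by group
      _ = b⁻¹ := by rw [hcc, one_mul, mul_one]
  -- conjugation of integer powers
  have conjz : ∀ (u v w : G), u * u = 1 → u * v * u = w → ∀ x : ℤ,
      u * v ^ x = w ^ x * u := by
    intro u v w hu huv x
    have huinv : u⁻¹ = u := inv_eq_of_mul_eq_one_left hu
    have h1 : (u * v * u⁻¹) ^ x = u * v ^ x * u⁻¹ := conj_zpow
    rw [huinv, huv] at h1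
    rw [h1, mul_assoc, hu, mul_one]
  have hdaz : ∀ x : ℤ, d * a ^ x = a ^ (-x) * d := by
    intro x; rw [conjz d a a⁻¹ hdd hdad x, inv_zpow, zpow_neg]
  have hdbz : ∀ x : ℤ, d * b ^ x = b ^ (-x) * d := by
    intro x; rw [conjz d b b⁻¹ hdd hdbd x, inv_zpow, zpow_neg]
  have hcaz : ∀ x : ℤ, c * a ^ x = b ^ (-x) * c := by
    intro x; rw [conjz c a b⁻¹ hcc hcac x, inv_zpow, zpow_neg]
  have hcbz : ∀ x : ℤ, c * b ^ x = a ^ (-x) * c := by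
    intro x; rw [conjz c b a⁻¹ hcc hcbc x, inv_zpow, zpow_neg]
  have hba : ∀ (x y : ℤ), b ^ y * a ^ x = a ^ x * b ^ y := fun x y =>
    (((show Commute b a from hab.symm)).zpow_zpow y x).eq
  have hdcz : ∀ e : ℤ, d * c ^ e = c ^ e * d := fun e =>
    (((show Commute d c from hcd.symm)).zpow_right e).eq
  -- the normal-form predicate with integer exponents
  set P : G → Prop := fun g => ∃ x y e f : ℤ, g = a ^ x * b ^ y * c ^ e * d ^ f
    with hP
  have P1 : P 1 := ⟨0, 0, 0, 0, by simp⟩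
  have La : ∀ g, P g → P (a * g) := by
    rintro g ⟨x, y, e, f, rfl⟩
    exact ⟨x + 1, y, e, f, by group⟩
  have La' : ∀ g, P g → P (a⁻¹ * g) := by
    rintro g ⟨x, y, e, f, rfl⟩
    exact ⟨x - 1, y, e, f, by group⟩
  have Lb : ∀ g, P g → P (b * g) := by
    rintro g ⟨x, y, e, f, rfl⟩
    refine ⟨x, y + 1, e, f, ?_⟩
    calc b * (a ^ x * b ^ y * c ^ e * d ^ f)
        = (b ^ (1:ℤ) * a ^ x) * (b ^ y * c ^ e * d ^ f) := by group
      _ = (a ^ x * b ^ (1:ℤ)) * (b ^ y * c ^ e * d ^ f) := by rw [hba]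
      _ = a ^ x * b ^ (y + 1) * c ^ e * d ^ f := by group
  have Lb' : ∀ g, P g → P (b⁻¹ * g) := by
    rintro g ⟨x, y, e, f, rfl⟩
    refine ⟨x, y - 1, e, f, ?_⟩
    calc b⁻¹ * (a ^ x * b ^ y * c ^ e * d ^ f)
        = (b ^ (-1:ℤ) * a ^ x) * (b ^ y * c ^ e * d ^ f) := by group
      _ = (a ^ x * b ^ (-1:ℤ)) * (b ^ y * c ^ e * d ^ f) := by rw [hba]
      _ = a ^ x * b ^ (y - 1) * c ^ e * d ^ f := by group
  have Lc : ∀ g, P g → P (c * g) := by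
    rintro g ⟨x, y, e, f, rfl⟩
    refine ⟨-y, -x, e + 1, f, ?_⟩
    calc c * (a ^ x * b ^ y * c ^ e * d ^ f)
        = (c * a ^ x) * (b ^ y * c ^ e * d ^ f) := by group
      _ = b ^ (-x) * ((c * b ^ y) * (c ^ e * d ^ f)) := by rw [hcaz]; group
      _ = b ^ (-x) * ((a ^ (-y) * c) * (c ^ e * d ^ f)) := by rw [hcbz]
      _ = (b ^ (-x) * a ^ (-y)) * (c ^ (e + 1) * d ^ f) := by group
      _ = (a ^ (-y) * b ^ (-x)) * (c ^ (e + 1) * d ^ f) := by rw [hba]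
      _ = a ^ (-y) * b ^ (-x) * c ^ (e + 1) * d ^ f := by group
  have Lc' : ∀ g, P g → P (c⁻¹ * g) := by rw [hcinv]; exact Lc
  have Ld : ∀ g, P g → P (d * g) := by
    rintro g ⟨x, y, e, f, rfl⟩
    refine ⟨-x, -y, e, f + 1, ?_⟩
    calc d * (a ^ x * b ^ y * c ^ e * d ^ f)
        = (d * a ^ x) * (b ^ y * c ^ e * d ^ f) := by group
      _ = a ^ (-x) * ((d * b ^ y) * (c ^ e * d ^ f)) := by rw [hdaz]; group
      _ = a ^ (-x) * (b ^ (-y) * ((d * c ^ e) * d ^ f)) := by rw [hdbz]; group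
      _ = a ^ (-x) * (b ^ (-y) * ((c ^ e * d) * d ^ f)) := by rw [hdcz]
      _ = a ^ (-x) * b ^ (-y) * c ^ e * d ^ (f + 1) := by group
  have Ld' : ∀ g, P g → P (d⁻¹ * g) := by rw [hdinv]; exact Ld
  -- every element of the closure satisfies P
  have main : ∀ g ∈ Subgroup.closure {a, b, c, d}, P g := by
    intro g hg
    have key : ∀ h, P h → P (g * h) ∧ P (g⁻¹ * h) := by
      induction hg using Subgroup.closure_induction with
      | mem x hx =>
          rcases hx with rfl | rfl | rfl | rfl
          · exact fun h hh => ⟨La h hh, La' h hh⟩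
          · exact fun h hh => ⟨Lb h hh, Lb' h hh⟩
          · exact fun h hh => ⟨Lc h hh, Lc' h hh⟩
          · exact fun h hh => ⟨Ld h hh, Ld' h hh⟩
      | one => intro h hh; exact ⟨by simpa using hh, by simpa using hh⟩
      | mul x y hx hy ihx ihy =>
          intro h hh
          constructor
          · have := (ihx (y * h) (ihy h hh).1).1; rwa [← mul_assoc] at this
          · have := (ihy (x⁻¹ * h) (ihx h hh).2).2
            rwa [← mul_assoc, ← mul_inv_rev] at this
      | inv x hx ihx =>
          intro h hh
          exact ⟨(ihx h hh).2, by simpa using (ihx h hh).1⟩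
    simpa using (key 1 P1).1
  -- reduce integer exponents to bounded natural ones
  have red : ∀ (u : G) (m : ℕ), 0 < m → u ^ m = 1 → ∀ x : ℤ,
      ∃ k : ℕ, k < m ∧ u ^ x = u ^ k := by
    intro u m hm hu x
    have h0 : 0 ≤ x % (m : ℤ) := Int.emod_nonneg x (by exact_mod_cast hm.ne')
    have h1 : x % (m : ℤ) < m := Int.emod_lt_of_pos x (by exact_mod_cast hm)
    refine ⟨(x % (m : ℤ)).toNat, by omega, ?_⟩
    have hum : u ^ (m : ℤ) = 1 := by rw [zpow_natCast, hu]
    calc u ^ x = u ^ ((m : ℤ) * (x / m) + x % m) := by rw [Int.mul_ediv_add_emod]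
      _ = (u ^ (m : ℤ)) ^ (x / (m : ℤ)) * u ^ (x % (m : ℤ)) := by
          rw [zpow_add, zpow_mul]
      _ = u ^ (x % (m : ℤ)) := by rw [hum, one_zpow, one_mul]
      _ = u ^ (x % (m : ℤ)).toNat := by
          rw [← zpow_natCast, Int.toNat_of_nonneg h0]
  have part1 : ∀ g ∈ Subgroup.closure {a, b, c, d}, ∃ x y e f : ℕ,
      x < n ∧ y < n ∧ e < 2 ∧ f < 2 ∧ g = a ^ x * b ^ y * c ^ e * d ^ f := by
    intro g hg
    obtain ⟨x, y, e, f, rfl⟩ := main g hg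
    obtain ⟨x', hx', hxe⟩ := red a n hn ha x
    obtain ⟨y', hy', hye⟩ := red b n hn hb y
    obtain ⟨e', he', hee⟩ := red c 2 (by norm_num) hc e
    obtain ⟨f', hf', hfe⟩ := red d 2 (by norm_num) hd f
    exact ⟨x', y', e', f', hx', hy', he', hf', by rw [hxe, hye, hee, hfe]⟩
  refine ⟨part1, ?_⟩
  -- cardinality bound
  have hmem : ∀ (x y e f : ℕ),
      a ^ x * b ^ y * c ^ e * d ^ f ∈ Subgroup.closure {a, b, c, d} := by
    intro x y e f
    have hA : a ∈ Subgroup.closure {a, b, c, d} :=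
      Subgroup.subset_closure (by simp)
    have hB : b ∈ Subgroup.closure {a, b, c, d} :=
      Subgroup.subset_closure (by simp)
    have hC : c ∈ Subgroup.closure {a, b, c, d} :=
      Subgroup.subset_closure (by simp)
    have hD : d ∈ Subgroup.closure {a, b, c, d} :=
      Subgroup.subset_closure (by simp)
    exact mul_mem (mul_mem (mul_mem (pow_mem hA x) (pow_mem hB y))
      (pow_mem hC e)) (pow_mem hD f)
  set F : Fin n × Fin n × Fin 2 × Fin 2 →
      (Subgroup.closure {a, b, c, d} : Subgroup G) := fun p =>
    ⟨a ^ (p.1 : ℕ) * b ^ (p.2.1 : ℕ) * c ^ (p.2.2.1 : ℕ) * d ^ (p.2.2.2 : ℕ),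
      hmem _ _ _ _⟩ with hF
  have hsurj : Function.Surjective F := by
    rintro ⟨g, hg⟩
    obtain ⟨x, y, e, f, hx, hy, he, hf, rfl⟩ := part1 g hg
    exact ⟨⟨⟨x, hx⟩, ⟨y, hy⟩, ⟨e, he⟩, ⟨f, hf⟩⟩, rfl⟩
  calc Nat.card (Subgroup.closure {a, b, c, d} : Subgroup G)
      ≤ Nat.card (Fin n × Fin n × Fin 2 × Fin 2) :=
        Nat.card_le_card_of_surjective F hsurj
    _ = 4 * n ^ 2 := by simp [Nat.card_eq_fintype_card]; ring
end

section
/- The graph TRC4C8(R)[n,n] is vertex-transitive for every n ≥ 1. -/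
def tr (n : ℕ) (a b : ZMod n) : Equiv.Perm (TV n) :=
  ⟨fun p => (p.1 + a, p.2.1 + b, p.2.2), fun p => (p.1 - a, p.2.1 - b, p.2.2),
   fun p => by simp, fun p => by simp⟩

lemma tr_base (n : ℕ) (a b : ZMod n) {p q : TV n} (h : baseRel n p q) :
    baseRel n (tr n a b p) (tr n a b q) := by
  obtain ⟨j, i, h⟩ := h
  refine ⟨j + a, i + b, ?_⟩
  rcases h with ⟨rfl, rfl⟩ | ⟨rfl, rfl⟩ | ⟨rfl, rfl⟩ | ⟨rfl, rfl⟩ | ⟨rfl, rfl⟩ | ⟨rfl, rfl⟩ <;>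
    simp [tr, Prod.ext_iff, add_right_comm] <;> tauto

lemma g3_base (n : ℕ) {p q : TV n} (h : baseRel n p q) :
    baseRel n (g3 n p) (g3 n q) ∨ baseRel n (g3 n q) (g3 n p) := by
  obtain ⟨j, i, h⟩ := h
  rcases h with ⟨rfl, rfl⟩ | ⟨rfl, rfl⟩ | ⟨rfl, rfl⟩ | ⟨rfl, rfl⟩ | ⟨rfl, rfl⟩ | ⟨rfl, rfl⟩ <;>
    simp only [g3, Function.Involutive.toPerm, Equiv.coe_fn_mk] <;>
    [ exact Or.inr ⟨i, j, by simp [sig, Prod.ext_iff]⟩;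
      exact Or.inl ⟨i, j, by simp [sig, Prod.ext_iff]⟩;
      exact Or.inl ⟨i, j, by simp [sig, Prod.ext_iff]⟩;
      exact Or.inl ⟨i, j, by simp [sig, Prod.ext_iff]⟩;
      exact Or.inl ⟨i, j, by simp [sig, Prod.ext_iff]⟩;
      exact Or.inr ⟨i, j, by simp [sig, Prod.ext_iff]⟩ ]

lemma g4_base (n : ℕ) {p q : TV n} (h : baseRel n p q) :
    baseRel n (g4 n p) (g4 n q) ∨ baseRel n (g4 n q) (g4 n p) := by
  obtain ⟨j, i, h⟩ := h
  rcases h with ⟨rfl, rfl⟩ | ⟨rfl, rfl⟩ | ⟨rfl, rfl⟩ | ⟨rfl, rfl⟩ | ⟨rfl, rfl⟩ | ⟨rfl, rfl⟩ <;>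
    simp only [g4, Function.Involutive.toPerm, Equiv.coe_fn_mk] <;>
    [ exact Or.inr ⟨1 - j, 1 - i, by simp [tau, Prod.ext_iff]⟩;
      exact Or.inr ⟨1 - j, 1 - i, by simp [tau, Prod.ext_iff]⟩;
      exact Or.inr ⟨-j, 1 - i, by simp [tau, Prod.ext_iff]; ring⟩;
      exact Or.inr ⟨1 - j, 1 - i, by simp [tau, Prod.ext_iff]⟩;
      exact Or.inr ⟨1 - j, -i, by simp [tau, Prod.ext_iff]; ring⟩;
      exact Or.inr ⟨1 - j, 1 - i, by simp [tau, Prod.ext_iff]⟩ ]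

def mkIso (n : ℕ) (f : Equiv.Perm (TV n))
    (hf : ∀ p q : TV n, baseRel n p q → baseRel n (f p) (f q) ∨ baseRel n (f q) (f p))
    (hf' : ∀ p q : TV n, baseRel n p q →
      baseRel n (f.symm p) (f.symm q) ∨ baseRel n (f.symm q) (f.symm p)) :
    TRC n ≃g TRC n := by
  refine ⟨f, fun {a b} => ?_⟩
  simp only [TRC, SimpleGraph.fromRel_adj]
  constructor
  · rintro ⟨hne, h⟩
    refine ⟨fun he => hne (congrArg f he), ?_⟩
    rcases h with h | h
    · have := hf' _ _ h; simpa using this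
    · have := hf' _ _ h; simp at this; tauto
  · rintro ⟨hne, h⟩
    refine ⟨fun he => hne (f.injective he), ?_⟩
    rcases h with h | h
    · exact hf _ _ h
    · exact (hf _ _ h).symm

def trIso (n : ℕ) (a b : ZMod n) : TRC n ≃g TRC n :=
  mkIso n (tr n a b) (fun p q h => Or.inl (tr_base n a b h))
    (fun p q h => Or.inl (by
      have := tr_base n (-a) (-b) h
      simpa [tr, sub_eq_add_neg] using this))

def g3Iso (n : ℕ) : TRC n ≃g TRC n :=
  mkIso n (g3 n) (fun _ _ h => g3_base n h) (fun _ _ h => g3_base n h)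

def g4Iso (n : ℕ) : TRC n ≃g TRC n :=
  mkIso n (g4 n) (fun _ _ h => g4_base n h) (fun _ _ h => g4_base n h)

lemma reach (n : ℕ) : ∀ v : TV n, ∃ φ : TRC n ≃g TRC n, φ ((0 : ZMod n), (0 : ZMod n), (0 : Fin 4)) = v := by
  rintro ⟨j, i, t⟩
  fin_cases t
  · exact ⟨trIso n j i, by simp [trIso, mkIso, tr]⟩
  · exact ⟨(g3Iso n).trans (trIso n j i), by
      simp [trIso, g3Iso, mkIso, tr, g3, sig, Function.Involutive.toPerm]⟩
  · exact ⟨(g4Iso n).trans ((g3Iso n).trans (trIso n (j-1) (i-1))), by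
      simp [trIso, g3Iso, g4Iso, mkIso, tr, g3, g4, sig, tau, Function.Involutive.toPerm]⟩
  · exact ⟨(g4Iso n).trans (trIso n (j-1) (i-1)), by
      simp [trIso, g4Iso, mkIso, tr, g4, tau, Function.Involutive.toPerm]⟩

/-- TRC4C8(R)[n,n] is vertex-transitive. -/
theorem trc_vertex_transitive (n : ℕ) (hn : 1 ≤ n) :
    ∀ u v : TV n, ∃ φ : TRC n ≃g TRC n, φ u = v := by
  intro u v
  obtain ⟨φu, hu⟩ := reach n u
  obtain ⟨φv, hv⟩ := reach n v
  refine ⟨φu.symm.trans φv, ?_⟩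
  have : φu.symm u = ((0 : ZMod n), (0 : ZMod n), (0 : Fin 4)) := by
    rw [← hu]; exact φu.symm_apply_apply _
  show φv (φu.symm u) = v
  rw [this]; exact hv
end
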